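/- Let $k, n \ge 1$, let $0 < l, l' < 1$ and set $l'' = \min(l, l')$. Let $m, m' \in \mathbb{R}$ satisfy $m + m' < -k$, $m + k \ne 0$, $m' + k \ne 0$, and set $m'' = \max\big( (m+k)_+ + m',\; m + (m'+k)_+,\; m + m' + k \big)$ where $t_+ = \max(t,0)$. Let $a, b : \mathbb{R}^n \times \mathbb{R}^k \to \mathbb{C}$ be continuous and suppose there are constants $C_a, C_b$ such that for every $\theta \in \mathbb{R}^k$: $\sup_x |a(x,\theta)| + \sup_{x \ne y} \frac{|a(x,\theta)-a(y,\theta)|}{|x-y|^{l}} \le C_a (1+|\theta|)^{m}$ and $\sup_x |b(x,\theta)| + \sup_{x \ne y} \frac{|b(x,\theta)-b(y,\theta)|}{|x-y|^{l'}} \le C_b (1+|\theta|)^{m'}$. Then the partial convolution $c(x,\theta) = \int_{\mathbb{R}^k} a(x,\sigma)\, b(x, \theta - \sigma)\, d\sigma$ is well defined and there is a constant $C$ (depending only on $k, l, l', m, m'$) such that for every $\theta$, $\sup_x |c(x,\theta)| + \sup_{x \ne y} \frac{|c(x,\theta)-c(y,\theta)|}{|x-y|^{l''}} \le C\, C_a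 C_b\, (1+|\theta|)^{m''}$. -/

import Mathlib

open MeasureTheory Set Module Metric

namespace PCH

theorem oneD_tail_int (q R : ℝ) (hq : q < -1) (hR : 0 ≤ R) : IntegrableOn (fun y : ℝ => (1+y)^q) (Ioi R) := by
  have h1 := (measurePreserving_add_right (volume : Measure ℝ) 1)
  have h2 : MeasurableEmbedding (fun y : ℝ => y + 1) := (Homeomorph.addRight (1:ℝ)).measurableEmbedding
  have h3 : IntegrableOn (fun t : ℝ => t ^ q) (Ioi (R+1)) := integrableOn_Ioi_rpow_of_lt hq (by linarith)
  have := (h1.integrableOn_comp_preimage h2 (f := fun t : ℝ => t ^ q) (s := Ioi (R+1))).2 h3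
  rw [show (fun y : ℝ => y + 1) ⁻¹' (Ioi (R+1)) = Ioi R by ext y; simp] at this
  exact this.congr_fun (fun y hy => by simp [Function.comp, add_comm]) measurableSet_Ioi

theorem oneD_tail_val (q R : ℝ) (hq : q < -1) (hR : 0 ≤ R) :
    ∫ y in Ioi R, (1+y)^q = -(1+R)^(q+1)/(q+1) := by
  have h1 := (measurePreserving_add_right (volume : Measure ℝ) 1)
  have h2 : MeasurableEmbedding (fun y : ℝ => y + 1) := (Homeomorph.addRight (1:ℝ)).measurableEmbedding
  have hmain := h1.setIntegral_preimage_emb h2 (fun t => t ^ q) (Ioi (R+1))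
  rw [show (fun y : ℝ => y + 1) ⁻¹' (Ioi (R+1)) = Ioi R by ext y; simp] at hmain
  rw [integral_Ioi_rpow_of_lt hq (by linarith : (0:ℝ) < R + 1)] at hmain
  rw [show (1:ℝ)+R = R+1 by ring, ← hmain]
  exact setIntegral_congr_fun measurableSet_Ioi (fun y _ => by simp [add_comm])

theorem polar_formula (k : ℕ) (hk : 1 ≤ k) (f : ℝ → ℝ) :
    ∫ x : EuclideanSpace ℝ (Fin k), f ‖x‖ =
      (k : ℝ) * ((volume : Measure (EuclideanSpace ℝ (Fin k))) (ball 0 1)).toReal *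
        ∫ y in Ioi (0:ℝ), y ^ (k-1) * f y := by
  haveI : Nonempty (Fin k) := ⟨⟨0,hk⟩⟩
  have h := MeasureTheory.integral_fun_norm_addHaar (volume : Measure (EuclideanSpace ℝ (Fin k))) f
  rw [h]
  rw [finrank_euclideanSpace, Fintype.card_fin]
  rw [nsmul_eq_mul, smul_eq_mul, ← mul_assoc]
  congr 1

theorem ball_est (k : ℕ) (hk : 1 ≤ k) (m : ℝ) (hm0 : m < 0) (hmk : 0 < m + k) :
    ∃ C > 0, ∀ R : ℝ, 0 ≤ R →
      ∫ σ in closedBall (0 : EuclideanSpace ℝ (Fin k)) R, (1 + ‖σ‖) ^ m ≤ C * (1+R)^(m+(k:ℝ)) := by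
  set ν := ((volume : Measure (EuclideanSpace ℝ (Fin k))) (ball 0 1)).toReal with hν
  have hν0 : 0 ≤ ν := ENNReal.toReal_nonneg
  set p := m + (k:ℝ) - 1 with hp
  have hp1 : -1 < p := by simp only [hp]; linarith
  set q := min p 0 with hq
  have hq1 : -1 < q := lt_min hp1 (by norm_num)
  have hq0 : q ≤ 0 := min_le_right _ _
  have hq1' : (0:ℝ) < q + 1 := by linarith
  refine ⟨(k:ℝ) * ν / (q+1) + 1, by positivity, fun R hR => ?_⟩
  have h1R : (0:ℝ) < 1 + R := by linarith
  have step1 : (∫ σ in closedBall (0 : EuclideanSpace ℝ (Fin k)) R, (1 + ‖σ‖) ^ m)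
      = ∫ σ : EuclideanSpace ℝ (Fin k), (indicator (Iic R) (fun y => (1+y)^m)) ‖σ‖ := by
    rw [← integral_indicator measurableSet_closedBall]
    refine integral_congr_ae (Filter.Eventually.of_forall fun σ => ?_)
    by_cases h : ‖σ‖ ≤ R <;>
      simp [Set.indicator_apply, h, mem_closedBall_zero_iff, mem_Iic]
  have step2 : (∫ y in Ioi (0:ℝ), y^(k-1) * indicator (Iic R) (fun t => (1+t)^m) y)
      = ∫ y in Ioc (0:ℝ) R, y^(k-1)*(1+y)^m := by
    calc (∫ y in Ioi (0:ℝ), y^(k-1) * indicator (Iic R) (fun t => (1+t)^m) y)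
        = ∫ y in Ioi (0:ℝ), indicator (Iic R) (fun t => t^(k-1)*(1+t)^m) y :=
          setIntegral_congr_fun measurableSet_Ioi (fun y _ => by
            by_cases h : y ∈ Iic R
            · simp [indicator_of_mem h]
            · simp [indicator_of_notMem h])
      _ = ∫ y in Ioi 0 ∩ Iic R, (fun t => t^(k-1)*(1+t)^m) y := setIntegral_indicator measurableSet_Iic
      _ = ∫ y in Ioc (0:ℝ) R, y^(k-1)*(1+y)^m := by rw [Set.Ioi_inter_Iic]
  have int1 : IntegrableOn (fun y : ℝ => y^(k-1)*(1+y)^m) (Ioc 0 R) := by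
    have hc : ContinuousOn (fun y : ℝ => y^(k-1)*(1+y)^m) (Icc 0 R) := by
      refine ContinuousOn.mul (continuous_pow (k-1)).continuousOn ?_
      exact ((continuous_const.add continuous_id).continuousOn).rpow_const
        (fun y hy => Or.inl (by rcases hy with ⟨h0, _⟩; intro hc; simp at hc; linarith))
    exact (hc.integrableOn_compact isCompact_Icc).mono_set Ioc_subset_Icc_self
  have int2 : IntegrableOn (fun y : ℝ => y ^ q) (Ioc 0 R) := (intervalIntegral.intervalIntegrable_rpow' hq1).1
  have pw : ∀ y ∈ Ioc (0:ℝ) R, y^(k-1)*(1+y)^m ≤ (1+R)^(max p 0) * y ^ q := by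
    rintro y ⟨hy0, hyR⟩
    have h1y : (0:ℝ) < 1 + y := by linarith
    have e0 : (y:ℝ)^(k-1) ≤ (1+y)^(k-1) := pow_le_pow_left₀ hy0.le (by linarith) _
    have e1 : ((1+y):ℝ)^(k-1) = (1+y) ^ ((k:ℝ)-1) := by
      rw [← Real.rpow_natCast (1+y) (k-1), Nat.cast_sub hk, Nat.cast_one]
    have e2 : (1+y) ^ ((k:ℝ)-1) * (1+y)^m = (1+y)^p := by
      rw [← Real.rpow_add h1y]; congr 1; simp only [hp]; ring
    have e3 : (1+y)^p = (1+y)^(max p 0) * (1+y)^q := by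
      rw [← Real.rpow_add h1y]; congr 1
      have := max_add_min p 0
      simp only [hq]; linarith
    have e4 : (1+y)^(max p 0) ≤ (1+R)^(max p 0) :=
      Real.rpow_le_rpow h1y.le (by linarith) (le_max_right _ _)
    have e5 : (1+y)^q ≤ y^q := Real.rpow_le_rpow_of_nonpos hy0 (by linarith) hq0
    calc y^(k-1)*(1+y)^m ≤ (1+y)^(k-1)*(1+y)^m :=
          mul_le_mul_of_nonneg_right e0 (Real.rpow_nonneg h1y.le _)
      _ = (1+y)^(max p 0) * (1+y)^q := by rw [e1, e2, e3]
      _ ≤ (1+R)^(max p 0) * y^q :=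
          mul_le_mul e4 e5 (Real.rpow_nonneg h1y.le _) (Real.rpow_nonneg h1R.le _)
  have step3 : (∫ y in Ioc (0:ℝ) R, y^(k-1)*(1+y)^m)
      ≤ ∫ y in Ioc (0:ℝ) R, (1+R)^(max p 0) * y ^ q :=
    setIntegral_mono_on int1 (int2.const_mul _) measurableSet_Ioc pw
  have hval : (∫ y in Ioc (0:ℝ) R, y ^ q) = R^(q+1)/(q+1) := by
    rw [← intervalIntegral.integral_of_le hR, integral_rpow (Or.inl hq1),
      Real.zero_rpow (by linarith : q+1 ≠ 0)]
    ring
  have step4 : (∫ y in Ioc (0:ℝ) R, (1+R)^(max p 0) * y ^ q)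
      ≤ (1+R)^(max p 0) * ((1+R)^(q+1)/(q+1)) := by
    rw [MeasureTheory.integral_const_mul, hval]
    have : R^(q+1) ≤ (1+R)^(q+1) := Real.rpow_le_rpow hR (by linarith) (by linarith)
    have h2 : R^(q+1)/(q+1) ≤ (1+R)^(q+1)/(q+1) :=
      div_le_div_of_nonneg_right this hq1'.le
    exact mul_le_mul_of_nonneg_left h2 (Real.rpow_nonneg h1R.le _)
  have hexp : (1+R)^(max p 0) * ((1+R)^(q+1)/(q+1)) = (1+R)^(m+(k:ℝ))/(q+1) := by
    rw [mul_div_assoc']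
    congr 1
    rw [← Real.rpow_add h1R]
    congr 1
    have := max_add_min p 0
    simp only [hq, hp] at *
    linarith
  calc (∫ σ in closedBall (0 : EuclideanSpace ℝ (Fin k)) R, (1 + ‖σ‖) ^ m)
      = (k:ℝ) * ν * ∫ y in Ioi (0:ℝ), y^(k-1) * indicator (Iic R) (fun t => (1+t)^m) y := by
        rw [step1, polar_formula k hk]
    _ = (k:ℝ) * ν * ∫ y in Ioc (0:ℝ) R, y^(k-1)*(1+y)^m := by rw [step2]
    _ ≤ (k:ℝ) * ν * ((1+R)^(m+(k:ℝ))/(q+1)) := by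
        refine mul_le_mul_of_nonneg_left ?_ (by positivity)
        rw [← hexp]
        exact step3.trans step4
    _ ≤ ((k:ℝ) * ν / (q+1) + 1) * (1+R)^(m+(k:ℝ)) := by
        have h0 : (0:ℝ) ≤ (1+R)^(m+(k:ℝ)) := Real.rpow_nonneg h1R.le _
        have he : (k:ℝ) * ν * ((1+R)^(m+(k:ℝ))/(q+1)) = ((k:ℝ)*ν/(q+1)) * (1+R)^(m+(k:ℝ)) := by
          ring
        rw [he]
        nlinarith [div_nonneg (by positivity : (0:ℝ) ≤ (k:ℝ)*ν) hq1'.le]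


theorem tail_est (k : ℕ) (hk : 1 ≤ k) (s : ℝ) (hs : s < -(k:ℝ)) :
    ∃ C > 0, ∀ R : ℝ, 0 ≤ R →
      ∫ σ in {σ : EuclideanSpace ℝ (Fin k) | R ≤ ‖σ‖}, (1+‖σ‖)^s ≤ C * (1+R)^(s+(k:ℝ)) := by
  set ν := ((volume : Measure (EuclideanSpace ℝ (Fin k))) (ball 0 1)).toReal with hν
  have hν0 : 0 ≤ ν := ENNReal.toReal_nonneg
  set q := s + (k:ℝ) - 1 with hqdef
  have hq : q < -1 := by simp only [hqdef]; linarith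
  have hsk : s + (k:ℝ) < 0 := by linarith
  have hD : (0:ℝ) < -(s+(k:ℝ)) := by linarith
  refine ⟨(k:ℝ) * ν * ((2:ℝ)^(-(s+(k:ℝ))) / (-(s+(k:ℝ)))) + 1, by
    have h1 : (0:ℝ) ≤ (k:ℝ) * ν * ((2:ℝ)^(-(s+(k:ℝ))) / (-(s+(k:ℝ)))) :=
      mul_nonneg (by positivity) (div_nonneg (by positivity) hD.le)
    linarith, fun R hR => ?_⟩
  have h1R : (0:ℝ) < 1 + R := by linarith
  have hmeas : MeasurableSet {σ : EuclideanSpace ℝ (Fin k) | R ≤ ‖σ‖} :=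
    (isClosed_le continuous_const continuous_norm).measurableSet
  have step1 : (∫ σ in {σ : EuclideanSpace ℝ (Fin k) | R ≤ ‖σ‖}, (1+‖σ‖)^s)
      = ∫ σ : EuclideanSpace ℝ (Fin k), (indicator (Ici R) (fun y => (1+y)^s)) ‖σ‖ := by
    rw [← integral_indicator hmeas]
    refine integral_congr_ae (Filter.Eventually.of_forall fun σ => ?_)
    by_cases h : R ≤ ‖σ‖ <;>
      simp [Set.indicator_apply, h, mem_Ici]
  have step2 : (∫ y in Ioi (0:ℝ), y^(k-1) * indicator (Ici R) (fun t => (1+t)^s) y)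
      = ∫ y in Ioi 0 ∩ Ici R, y^(k-1)*(1+y)^s := by
    calc (∫ y in Ioi (0:ℝ), y^(k-1) * indicator (Ici R) (fun t => (1+t)^s) y)
        = ∫ y in Ioi (0:ℝ), indicator (Ici R) (fun t => t^(k-1)*(1+t)^s) y :=
          setIntegral_congr_fun measurableSet_Ioi (fun y _ => by
            by_cases h : y ∈ Ici R
            · simp [indicator_of_mem h]
            · simp [indicator_of_notMem h])
      _ = ∫ y in Ioi 0 ∩ Ici R, (fun t => t^(k-1)*(1+t)^s) y := setIntegral_indicator measurableSet_Ici
  have hsub : Ioi (0:ℝ) ∩ Ici R ⊆ Ioi (R/2) := by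
    rintro y ⟨h1, h2⟩
    simp only [mem_Ioi] at *
    simp only [mem_Ici] at h2
    linarith
  have hmeas2 : MeasurableSet (Ioi (0:ℝ) ∩ Ici R) := measurableSet_Ioi.inter measurableSet_Ici
  have pw : ∀ y ∈ Ioi (0:ℝ) ∩ Ici R, y^(k-1)*(1+y)^s ≤ (1+y)^q := by
    rintro y ⟨hy0, _⟩
    simp only [mem_Ioi] at hy0
    have h1y : (0:ℝ) < 1 + y := by linarith
    have e0 : (y:ℝ)^(k-1) ≤ (1+y)^(k-1) := pow_le_pow_left₀ hy0.le (by linarith) _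
    have e1 : ((1+y):ℝ)^(k-1) = (1+y) ^ ((k:ℝ)-1) := by
      rw [← Real.rpow_natCast (1+y) (k-1), Nat.cast_sub hk, Nat.cast_one]
    have e2 : (1+y) ^ ((k:ℝ)-1) * (1+y)^s = (1+y)^q := by
      rw [← Real.rpow_add h1y]; congr 1; simp only [hqdef]; ring
    calc y^(k-1)*(1+y)^s ≤ (1+y)^(k-1)*(1+y)^s :=
          mul_le_mul_of_nonneg_right e0 (Real.rpow_nonneg h1y.le _)
      _ = (1+y)^q := by rw [e1, e2]
  have intq : IntegrableOn (fun y : ℝ => (1+y)^q) (Ioi (R/2)) :=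
    oneD_tail_int q (R/2) hq (by linarith)
  have intq2 : IntegrableOn (fun y : ℝ => (1+y)^q) (Ioi 0 ∩ Ici R) :=
    intq.mono_set hsub
  have intf : IntegrableOn (fun y : ℝ => y^(k-1)*(1+y)^s) (Ioi 0 ∩ Ici R) := by
    refine Integrable.mono' intq2 ?_ ?_
    · refine ContinuousOn.aestronglyMeasurable ?_ hmeas2
      refine ContinuousOn.mul (continuous_pow (k-1)).continuousOn ?_
      exact ((continuous_const.add continuous_id).continuousOn).rpow_const
        (fun y hy => Or.inl (by rcases hy with ⟨h0, _⟩; simp only [mem_Ioi] at h0; show (1:ℝ) + y ≠ 0; intro hc; linarith))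
    · rw [ae_restrict_iff' hmeas2]
      refine Filter.Eventually.of_forall fun y hy => ?_
      have h := pw y hy
      rcases hy with ⟨hy0, _⟩
      simp only [mem_Ioi] at hy0
      have h1y : (0:ℝ) < 1 + y := by linarith
      rwa [Real.norm_eq_abs, abs_of_nonneg (by positivity)]
  have step3 : (∫ y in Ioi 0 ∩ Ici R, y^(k-1)*(1+y)^s) ≤ ∫ y in Ioi 0 ∩ Ici R, (1+y)^q :=
    setIntegral_mono_on intf intq2 hmeas2 pw
  have step4 : (∫ y in Ioi 0 ∩ Ici R, (1+y)^q) ≤ ∫ y in Ioi (R/2), (1+y)^q := by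
    refine setIntegral_mono_set intq ?_ (HasSubset.Subset.eventuallyLE hsub)
    filter_upwards [ae_restrict_mem measurableSet_Ioi] with y hy
    simp only [mem_Ioi] at hy
    have : (0:ℝ) < 1 + y := by linarith
    positivity
  have hval : (∫ y in Ioi (R/2), (1+y)^q) = (1+R/2)^(s+(k:ℝ)) / (-(s+(k:ℝ))) := by
    rw [oneD_tail_val q (R/2) hq (by linarith)]
    rw [show q + 1 = s + (k:ℝ) by simp only [hqdef]; ring]
    rw [neg_div, div_neg]
  have hhalf : (1+R/2)^(s+(k:ℝ)) ≤ (2:ℝ)^(-(s+(k:ℝ))) * (1+R)^(s+(k:ℝ)) := by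
    have ha : (1+R/2)^(s+(k:ℝ)) ≤ ((1+R)/2)^(s+(k:ℝ)) :=
      Real.rpow_le_rpow_of_nonpos (by linarith) (by linarith) hsk.le
    have hb : ((1+R)/2)^(s+(k:ℝ)) = (1+R)^(s+(k:ℝ)) / (2:ℝ)^(s+(k:ℝ)) :=
      Real.div_rpow h1R.le (by norm_num) _
    have hc : (1+R)^(s+(k:ℝ)) / (2:ℝ)^(s+(k:ℝ)) = (2:ℝ)^(-(s+(k:ℝ))) * (1+R)^(s+(k:ℝ)) := by
      rw [Real.rpow_neg (by norm_num)]
      ring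
    rw [hb, hc] at ha
    exact ha
  calc (∫ σ in {σ : EuclideanSpace ℝ (Fin k) | R ≤ ‖σ‖}, (1+‖σ‖)^s)
      = (k:ℝ) * ν * ∫ y in Ioi (0:ℝ), y^(k-1) * indicator (Ici R) (fun t => (1+t)^s) y := by
        rw [step1, polar_formula k hk]
    _ = (k:ℝ) * ν * ∫ y in Ioi 0 ∩ Ici R, y^(k-1)*(1+y)^s := by rw [step2]
    _ ≤ (k:ℝ) * ν * ((1+R/2)^(s+(k:ℝ)) / (-(s+(k:ℝ)))) := by
        refine mul_le_mul_of_nonneg_left ?_ (by positivity)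
        rw [← hval]
        exact (step3.trans step4)
    _ ≤ (k:ℝ) * ν * ((2:ℝ)^(-(s+(k:ℝ))) / (-(s+(k:ℝ)))) * (1+R)^(s+(k:ℝ)) := by
        have : (k:ℝ) * ν * ((2:ℝ)^(-(s+(k:ℝ))) / (-(s+(k:ℝ)))) * (1+R)^(s+(k:ℝ))
            = (k:ℝ) * ν * (((2:ℝ)^(-(s+(k:ℝ))) * (1+R)^(s+(k:ℝ))) / (-(s+(k:ℝ)))) := by ring
        rw [this]
        refine mul_le_mul_of_nonneg_left ?_ (by positivity)
        exact div_le_div_of_nonneg_right hhalf hD.le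
    _ ≤ ((k:ℝ) * ν * ((2:ℝ)^(-(s+(k:ℝ))) / (-(s+(k:ℝ)))) + 1) * (1+R)^(s+(k:ℝ)) := by
        have h0 : (0:ℝ) ≤ (1+R)^(s+(k:ℝ)) := Real.rpow_nonneg h1R.le _
        nlinarith

theorem w_cont (k : ℕ) (s : ℝ) :
    Continuous (fun σ : EuclideanSpace ℝ (Fin k) => (1+‖σ‖)^s) :=
  (continuous_const.add continuous_norm).rpow_const
    (fun σ => Or.inl (by show (1:ℝ) + ‖σ‖ ≠ 0; positivity))

theorem integrable_w (k : ℕ) (hk : 1 ≤ k) (s : ℝ) (hs : s < -(k:ℝ)) :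
    Integrable (fun σ : EuclideanSpace ℝ (Fin k) => (1+‖σ‖)^s) := by
  have h := integrable_one_add_norm (E := EuclideanSpace ℝ (Fin k)) (μ := volume) (r := -s)
    (by rw [finrank_euclideanSpace, Fintype.card_fin]; linarith)
  refine h.congr (Filter.Eventually.of_forall fun σ => ?_)
  simp only [neg_neg]

theorem half_bound (e t u : ℝ) (he : e ≤ 0) (ht : 0 ≤ t) (hu : (1+t)/2 ≤ 1 + u) :
    (1+u)^e ≤ 2^(-e) * (1+t)^e := by
  have h0 : (0:ℝ) < (1+t)/2 := by linarith
  have ha : (1+u)^e ≤ ((1+t)/2)^e := Real.rpow_le_rpow_of_nonpos h0 hu he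
  have hb : ((1+t)/2)^e = (1+t)^e / (2:ℝ)^e := Real.div_rpow (by linarith) (by norm_num) _
  have hc : (1+t)^e / (2:ℝ)^e = (2:ℝ)^(-e) * (1+t)^e := by
    rw [Real.rpow_neg (by norm_num)]; ring
  rw [hb, hc] at ha
  exact ha

theorem ball_int_est (k : ℕ) (hk : 1 ≤ k) (m : ℝ) (hm0 : m < 0) (hmk : m + (k:ℝ) ≠ 0) :
    ∃ C > 0, ∀ R : ℝ, 0 ≤ R →
      ∫ σ in closedBall (0 : EuclideanSpace ℝ (Fin k)) R, (1 + ‖σ‖) ^ m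
        ≤ C * (1+R)^(max (m+(k:ℝ)) 0) := by
  rcases lt_or_gt_of_ne hmk with hlt | hgt
  · -- m + k < 0 : integrable on whole space
    have hint := integrable_w k hk m (by linarith)
    set J := ∫ σ : EuclideanSpace ℝ (Fin k), (1+‖σ‖)^m with hJ
    have hJ0 : 0 ≤ J := integral_nonneg (fun σ => Real.rpow_nonneg (by positivity) _)
    refine ⟨J + 1, by linarith, fun R hR => ?_⟩
    have h1 : (∫ σ in closedBall (0 : EuclideanSpace ℝ (Fin k)) R, (1 + ‖σ‖) ^ m) ≤ J :=
      setIntegral_le_integral hint (Filter.Eventually.of_forall fun σ => Real.rpow_nonneg (by positivity) _)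
    have h2 : max (m+(k:ℝ)) 0 = 0 := max_eq_right hlt.le
    rw [h2, Real.rpow_zero]
    linarith
  · obtain ⟨C, hC, hb⟩ := ball_est k hk m hm0 hgt
    refine ⟨C, hC, fun R hR => ?_⟩
    rw [max_eq_left hgt.le]
    exact hb R hR

set_option maxHeartbeats 2000000 in
theorem key (k : ℕ) (hk : 1 ≤ k) (m m' : ℝ) (hmm' : m + m' < -(k:ℝ))
    (hm : m + (k:ℝ) ≠ 0) (hm' : m' + (k:ℝ) ≠ 0) :
    ∃ C0 > 0, ∀ θ : EuclideanSpace ℝ (Fin k),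
      Integrable (fun σ : EuclideanSpace ℝ (Fin k) => (1+‖σ‖)^m * (1+‖θ-σ‖)^m') ∧
      (∫ σ : EuclideanSpace ℝ (Fin k), (1+‖σ‖)^m * (1+‖θ-σ‖)^m')
        ≤ C0 * (1+‖θ‖)^(max (max (max (m+(k:ℝ)) 0 + m') (m + max (m'+(k:ℝ)) 0)) (m+m'+(k:ℝ))) := by
  set M := max (max (max (m+(k:ℝ)) 0 + m') (m + max (m'+(k:ℝ)) 0)) (m+m'+(k:ℝ)) with hM
  have hM1 : max (m+(k:ℝ)) 0 + m' ≤ M := le_max_of_le_left (le_max_of_le_left le_rfl)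
  have hM2 : m + max (m'+(k:ℝ)) 0 ≤ M := le_max_of_le_left (le_max_of_le_right le_rfl)
  have hM3 : m+m'+(k:ℝ) ≤ M := le_max_right _ _
  have hm'M : m' ≤ M := le_trans (by simp [le_max_right]) hM1
  have hmM : m ≤ M := le_trans (by simp [le_max_right]) hM2
  have hcont : ∀ θ : EuclideanSpace ℝ (Fin k),
      Continuous (fun σ : EuclideanSpace ℝ (Fin k) => (1+‖σ‖)^m * (1+‖θ-σ‖)^m') := by
    intro θ
    exact (w_cont k m).mul ((w_cont k m').comp (continuous_const.sub continuous_id))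
  have hnn : ∀ (θ σ : EuclideanSpace ℝ (Fin k)), 0 ≤ (1+‖σ‖)^m * (1+‖θ-σ‖)^m' := by
    intro θ σ
    exact mul_nonneg (Real.rpow_nonneg (by positivity) _) (Real.rpow_nonneg (by positivity) _)
  have hbase : ∀ θ : EuclideanSpace ℝ (Fin k), (1:ℝ) ≤ 1 + ‖θ‖ := by
    intro θ; have := norm_nonneg θ; linarith
  rcases le_or_gt 0 m' with hm'0 | hm'0
  · -- m' ≥ 0 : Peetre in σ
    have hJint := integrable_w k hk (m+m') (by linarith)
    set J := ∫ σ : EuclideanSpace ℝ (Fin k), (1+‖σ‖)^(m+m') with hJ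
    have hJ0 : 0 ≤ J := integral_nonneg (fun σ => Real.rpow_nonneg (by positivity) _)
    refine ⟨J + 1, by linarith, fun θ => ?_⟩
    have pt : ∀ σ : EuclideanSpace ℝ (Fin k),
        (1+‖σ‖)^m * (1+‖θ-σ‖)^m' ≤ (1+‖θ‖)^m' * (1+‖σ‖)^(m+m') := by
      intro σ
      have hpe : 1+‖θ-σ‖ ≤ (1+‖θ‖)*(1+‖σ‖) := by
        have := norm_sub_le θ σ
        nlinarith [norm_nonneg θ, norm_nonneg σ]
      have h1 : (1+‖θ-σ‖)^m' ≤ ((1+‖θ‖)*(1+‖σ‖))^m' :=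
        Real.rpow_le_rpow (by positivity) hpe hm'0
      have h2 : ((1+‖θ‖)*(1+‖σ‖))^m' = (1+‖θ‖)^m' * (1+‖σ‖)^m' :=
        Real.mul_rpow (by positivity) (by positivity)
      calc (1+‖σ‖)^m * (1+‖θ-σ‖)^m' ≤ (1+‖σ‖)^m * ((1+‖θ‖)^m' * (1+‖σ‖)^m') := by
            rw [← h2]
            exact mul_le_mul_of_nonneg_left h1 (Real.rpow_nonneg (by positivity) _)
        _ = (1+‖θ‖)^m' * ((1+‖σ‖)^m * (1+‖σ‖)^m') := by ring
        _ = (1+‖θ‖)^m' * (1+‖σ‖)^(m+m') := by rw [← Real.rpow_add (by positivity)]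
    have hdom : Integrable (fun σ : EuclideanSpace ℝ (Fin k) => (1+‖θ‖)^m' * (1+‖σ‖)^(m+m')) :=
      hJint.const_mul _
    have hint : Integrable (fun σ : EuclideanSpace ℝ (Fin k) => (1+‖σ‖)^m * (1+‖θ-σ‖)^m') := by
      refine hdom.mono' (hcont θ).aestronglyMeasurable (Filter.Eventually.of_forall fun σ => ?_)
      rw [Real.norm_eq_abs, abs_of_nonneg (hnn θ σ)]
      exact pt σ
    refine ⟨hint, ?_⟩
    calc (∫ σ : EuclideanSpace ℝ (Fin k), (1+‖σ‖)^m * (1+‖θ-σ‖)^m')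
        ≤ ∫ σ : EuclideanSpace ℝ (Fin k), (1+‖θ‖)^m' * (1+‖σ‖)^(m+m') :=
          integral_mono hint hdom pt
      _ = (1+‖θ‖)^m' * J := by rw [MeasureTheory.integral_const_mul]
      _ ≤ (J+1) * (1+‖θ‖)^M := by
          have h1 : (1+‖θ‖)^m' ≤ (1+‖θ‖)^M := Real.rpow_le_rpow_of_exponent_le (hbase θ) hm'M
          have h2 : (0:ℝ) ≤ (1+‖θ‖)^m' := Real.rpow_nonneg (by positivity) _
          have h3 : (0:ℝ) ≤ (1+‖θ‖)^M := Real.rpow_nonneg (by positivity) _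
          nlinarith
  rcases le_or_gt 0 m with hm0 | hm0
  · -- m ≥ 0, m' < 0 : Peetre in θ - σ
    have hJint := integrable_w k hk (m+m') (by linarith)
    set J := ∫ σ : EuclideanSpace ℝ (Fin k), (1+‖σ‖)^(m+m') with hJ
    have hJ0 : 0 ≤ J := integral_nonneg (fun σ => Real.rpow_nonneg (by positivity) _)
    refine ⟨J + 1, by linarith, fun θ => ?_⟩
    have pt : ∀ σ : EuclideanSpace ℝ (Fin k),
        (1+‖σ‖)^m * (1+‖θ-σ‖)^m' ≤ (1+‖θ‖)^m * (1+‖θ-σ‖)^(m+m') := by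
      intro σ
      have hpe : 1+‖σ‖ ≤ (1+‖θ‖)*(1+‖θ-σ‖) := by
        have h := norm_sub_le θ (θ - σ)
        rw [sub_sub_cancel] at h
        nlinarith [norm_nonneg θ, norm_nonneg (θ-σ)]
      have h1 : (1+‖σ‖)^m ≤ ((1+‖θ‖)*(1+‖θ-σ‖))^m :=
        Real.rpow_le_rpow (by positivity) hpe hm0
      have h2 : ((1+‖θ‖)*(1+‖θ-σ‖))^m = (1+‖θ‖)^m * (1+‖θ-σ‖)^m :=
        Real.mul_rpow (by positivity) (by positivity)
      calc (1+‖σ‖)^m * (1+‖θ-σ‖)^m' ≤ ((1+‖θ‖)^m * (1+‖θ-σ‖)^m) * (1+‖θ-σ‖)^m' := by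
            rw [← h2]
            exact mul_le_mul_of_nonneg_right h1 (Real.rpow_nonneg (by positivity) _)
        _ = (1+‖θ‖)^m * ((1+‖θ-σ‖)^m * (1+‖θ-σ‖)^m') := by ring
        _ = (1+‖θ‖)^m * (1+‖θ-σ‖)^(m+m') := by rw [← Real.rpow_add (by positivity)]
    have hdom : Integrable (fun σ : EuclideanSpace ℝ (Fin k) => (1+‖θ‖)^m * (1+‖θ-σ‖)^(m+m')) :=
      (hJint.comp_sub_left θ).const_mul _
    have hint : Integrable (fun σ : EuclideanSpace ℝ (Fin k) => (1+‖σ‖)^m * (1+‖θ-σ‖)^m') := by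
      refine hdom.mono' (hcont θ).aestronglyMeasurable (Filter.Eventually.of_forall fun σ => ?_)
      rw [Real.norm_eq_abs, abs_of_nonneg (hnn θ σ)]
      exact pt σ
    refine ⟨hint, ?_⟩
    calc (∫ σ : EuclideanSpace ℝ (Fin k), (1+‖σ‖)^m * (1+‖θ-σ‖)^m')
        ≤ ∫ σ : EuclideanSpace ℝ (Fin k), (1+‖θ‖)^m * (1+‖θ-σ‖)^(m+m') :=
          integral_mono hint hdom pt
      _ = (1+‖θ‖)^m * ∫ σ : EuclideanSpace ℝ (Fin k), (1+‖θ-σ‖)^(m+m') := by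
          rw [MeasureTheory.integral_const_mul]
      _ = (1+‖θ‖)^m * J := by
          rw [integral_sub_left_eq_self (fun σ : EuclideanSpace ℝ (Fin k) => (1+‖σ‖)^(m+m')) volume θ]
      _ ≤ (J+1) * (1+‖θ‖)^M := by
          have h1 : (1+‖θ‖)^m ≤ (1+‖θ‖)^M := Real.rpow_le_rpow_of_exponent_le (hbase θ) hmM
          have h2 : (0:ℝ) ≤ (1+‖θ‖)^m := Real.rpow_nonneg (by positivity) _
          have h3 : (0:ℝ) ≤ (1+‖θ‖)^M := Real.rpow_nonneg (by positivity) _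
          nlinarith
  · -- m < 0 and m' < 0
    obtain ⟨CK, hCK, hKb⟩ := ball_int_est k hk m hm0 hm
    obtain ⟨CK', hCK', hKb'⟩ := ball_int_est k hk m' hm'0 hm'
    obtain ⟨CT, hCT, hTb⟩ := tail_est k hk (m+m') hmm'
    have hmmk : m + m' + (k:ℝ) < 0 := by linarith
    set c3 : ℝ := (2:ℝ)^(-(m+m'+(k:ℝ))) * CT with hc3
    have hc30 : 0 < c3 := mul_pos (Real.rpow_pos_of_pos (by norm_num) _) hCT
    have hterm1 : (0:ℝ) < (2:ℝ)^(-m') * CK := mul_pos (Real.rpow_pos_of_pos (by norm_num) _) hCK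
    have hterm2 : (0:ℝ) < (2:ℝ)^(-m) * CK' := mul_pos (Real.rpow_pos_of_pos (by norm_num) _) hCK'
    refine ⟨(2:ℝ)^(-m') * CK + (2:ℝ)^(-m) * CK' + 2 * c3, by linarith, fun θ => ?_⟩
    set R := ‖θ‖/2 with hRdef
    have hθ0 : (0:ℝ) ≤ ‖θ‖ := norm_nonneg θ
    have hR0 : 0 ≤ R := by positivity
    set A := closedBall (0 : EuclideanSpace ℝ (Fin k)) R with hA
    set B := {σ : EuclideanSpace ℝ (Fin k) | R ≤ ‖σ‖} with hB
    have hmeasA : MeasurableSet A := measurableSet_closedBall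
    have hmeasB : MeasurableSet B := (isClosed_le continuous_const continuous_norm).measurableSet
    set c1 : ℝ := (2:ℝ)^(-m') * (1+‖θ‖)^m' with hc1
    set c2 : ℝ := (2:ℝ)^(-m) * (1+‖θ‖)^m with hc2
    have hc10 : 0 ≤ c1 := by positivity
    have hc20 : 0 ≤ c2 := by positivity
    set wm := fun σ : EuclideanSpace ℝ (Fin k) => (1+‖σ‖)^m with hwm
    set wm' := fun σ : EuclideanSpace ℝ (Fin k) => (1+‖σ‖)^m' with hwm'
    set wmm := fun σ : EuclideanSpace ℝ (Fin k) => (1+‖σ‖)^(m+m') with hwmm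
    have hwnn : ∀ (s : ℝ) (σ : EuclideanSpace ℝ (Fin k)), 0 ≤ (1+‖σ‖)^s :=
      fun s σ => Real.rpow_nonneg (by positivity) _
    set g1 := fun σ : EuclideanSpace ℝ (Fin k) => c1 * A.indicator wm σ with hg1
    set g2 := fun σ : EuclideanSpace ℝ (Fin k) => c2 * A.indicator wm' (θ - σ) with hg2
    set g3 := fun σ : EuclideanSpace ℝ (Fin k) => B.indicator wmm σ with hg3
    set g4 := fun σ : EuclideanSpace ℝ (Fin k) => B.indicator wmm (θ - σ) with hg4
    have hg1nn : ∀ σ, 0 ≤ g1 σ :=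
      fun σ => mul_nonneg hc10 (indicator_nonneg (fun τ _ => hwnn m τ) σ)
    have hg2nn : ∀ σ, 0 ≤ g2 σ :=
      fun σ => mul_nonneg hc20 (indicator_nonneg (fun τ _ => hwnn m' τ) (θ - σ))
    have hg3nn : ∀ σ, 0 ≤ g3 σ := fun σ => indicator_nonneg (fun τ _ => hwnn (m+m') τ) σ
    have hg4nn : ∀ σ, 0 ≤ g4 σ := fun σ => indicator_nonneg (fun τ _ => hwnn (m+m') τ) (θ - σ)
    have hiA : IntegrableOn wm A := ((w_cont k m).continuousOn).integrableOn_compact (isCompact_closedBall _ _)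
    have hiA' : IntegrableOn wm' A := ((w_cont k m').continuousOn).integrableOn_compact (isCompact_closedBall _ _)
    have hiB : Integrable (B.indicator wmm) := (integrable_w k hk (m+m') (by linarith)).indicator hmeasB
    have hg1i : Integrable g1 := ((integrable_indicator_iff hmeasA).2 hiA).const_mul c1
    have hg2i : Integrable g2 := (((integrable_indicator_iff hmeasA).2 hiA').comp_sub_left θ).const_mul c2
    have hg3i : Integrable g3 := hiB
    have hg4i : Integrable g4 := hiB.comp_sub_left θ
    have hsum_i : Integrable (fun σ => g1 σ + g2 σ + g3 σ + g4 σ) := ((hg1i.add hg2i).add hg3i).add hg4i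
    have pt : ∀ σ : EuclideanSpace ℝ (Fin k),
        (1+‖σ‖)^m * (1+‖θ-σ‖)^m' ≤ g1 σ + g2 σ + g3 σ + g4 σ := by
      intro σ
      have htri : ‖θ‖ ≤ ‖θ-σ‖ + ‖σ‖ := by
        have h := norm_add_le (θ - σ) σ
        rwa [sub_add_cancel] at h
      rcases le_or_gt ‖σ‖ R with h|h
      · have hts : (1+‖θ‖)/2 ≤ 1 + ‖θ-σ‖ := by
          simp only [hRdef] at h
          linarith
        have hwb : (1+‖θ-σ‖)^m' ≤ c1 := half_bound m' ‖θ‖ ‖θ-σ‖ hm'0.le hθ0 hts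
        have hmem : σ ∈ A := by rw [hA, mem_closedBall_zero_iff]; exact h
        have hle : (1+‖σ‖)^m * (1+‖θ-σ‖)^m' ≤ g1 σ := by
          rw [hg1]
          simp only [indicator_of_mem hmem]
          calc (1+‖σ‖)^m * (1+‖θ-σ‖)^m' ≤ (1+‖σ‖)^m * c1 :=
                mul_le_mul_of_nonneg_left hwb (hwnn m σ)
            _ = c1 * wm σ := by rw [hwm]; ring
        linarith [hg2nn σ, hg3nn σ, hg4nn σ]
      rcases le_or_gt ‖θ-σ‖ R with h2|h2
      · have hts : (1+‖θ‖)/2 ≤ 1 + ‖σ‖ := by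
          simp only [hRdef] at h
          linarith
        have hwb : (1+‖σ‖)^m ≤ c2 := half_bound m ‖θ‖ ‖σ‖ hm0.le hθ0 hts
        have hmem : θ - σ ∈ A := by rw [hA, mem_closedBall_zero_iff]; exact h2
        have hle : (1+‖σ‖)^m * (1+‖θ-σ‖)^m' ≤ g2 σ := by
          rw [hg2]
          simp only [indicator_of_mem hmem]
          calc (1+‖σ‖)^m * (1+‖θ-σ‖)^m' ≤ c2 * (1+‖θ-σ‖)^m' :=
                mul_le_mul_of_nonneg_right hwb (hwnn m' (θ - σ))
            _ = c2 * wm' (θ - σ) := by rw [hwm']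
        linarith [hg1nn σ, hg3nn σ, hg4nn σ]
      rcases le_total ‖σ‖ ‖θ-σ‖ with h3|h3
      · have hle : (1+‖σ‖)^m * (1+‖θ-σ‖)^m' ≤ g3 σ := by
          have hmem : σ ∈ B := by rw [hB]; exact h.le
          rw [hg3]
          simp only [indicator_of_mem hmem]
          calc (1+‖σ‖)^m * (1+‖θ-σ‖)^m' ≤ (1+‖σ‖)^m * (1+‖σ‖)^m' :=
                mul_le_mul_of_nonneg_left
                  (Real.rpow_le_rpow_of_nonpos (by positivity) (by linarith) hm'0.le) (hwnn m σ)
            _ = wmm σ := by rw [hwmm, ← Real.rpow_add (by positivity)]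
        linarith [hg1nn σ, hg2nn σ, hg4nn σ]
      · have hle : (1+‖σ‖)^m * (1+‖θ-σ‖)^m' ≤ g4 σ := by
          have hmem : θ - σ ∈ B := by rw [hB]; exact h2.le
          rw [hg4]
          simp only [indicator_of_mem hmem]
          calc (1+‖σ‖)^m * (1+‖θ-σ‖)^m' ≤ (1+‖θ-σ‖)^m * (1+‖θ-σ‖)^m' :=
                mul_le_mul_of_nonneg_right
                  (Real.rpow_le_rpow_of_nonpos (by positivity) (by linarith) hm0.le) (hwnn m' (θ - σ))
            _ = wmm (θ - σ) := by rw [hwmm, ← Real.rpow_add (by positivity)]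
        linarith [hg1nn σ, hg2nn σ, hg3nn σ]
    have hint : Integrable (fun σ : EuclideanSpace ℝ (Fin k) => (1+‖σ‖)^m * (1+‖θ-σ‖)^m') := by
      refine hsum_i.mono' (hcont θ).aestronglyMeasurable (Filter.Eventually.of_forall fun σ => ?_)
      rw [Real.norm_eq_abs, abs_of_nonneg (hnn θ σ)]
      exact pt σ
    refine ⟨hint, ?_⟩
    set X := (1+‖θ‖)^M with hX
    have hX0 : 0 ≤ X := by positivity
    have hbb : 1 + R ≤ 1 + ‖θ‖ := by simp only [hRdef]; linarith
    have e1 : (∫ σ, g1 σ) ≤ (2:ℝ)^(-m') * CK * X := by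
      have : (∫ σ, g1 σ) = c1 * ∫ σ in A, wm σ := by
        rw [hg1, MeasureTheory.integral_const_mul, integral_indicator hmeasA]
      rw [this]
      have hKR := hKb R hR0
      calc c1 * ∫ σ in A, wm σ ≤ c1 * (CK * (1+R)^(max (m+(k:ℝ)) 0)) :=
            mul_le_mul_of_nonneg_left hKR hc10
        _ ≤ c1 * (CK * (1+‖θ‖)^(max (m+(k:ℝ)) 0)) := by
            refine mul_le_mul_of_nonneg_left (mul_le_mul_of_nonneg_left ?_ hCK.le) hc10
            exact Real.rpow_le_rpow (by linarith) hbb (le_max_right _ _)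
        _ = (2:ℝ)^(-m') * CK * ((1+‖θ‖)^m' * (1+‖θ‖)^(max (m+(k:ℝ)) 0)) := by rw [hc1]; ring
        _ = (2:ℝ)^(-m') * CK * (1+‖θ‖)^(max (m+(k:ℝ)) 0 + m') := by
            rw [← Real.rpow_add (by positivity), add_comm m' _]
        _ ≤ (2:ℝ)^(-m') * CK * X := by
            refine mul_le_mul_of_nonneg_left ?_ (by positivity)
            exact Real.rpow_le_rpow_of_exponent_le (hbase θ) hM1
    have e2 : (∫ σ, g2 σ) ≤ (2:ℝ)^(-m) * CK' * X := by
      have : (∫ σ, g2 σ) = c2 * ∫ σ in A, wm' σ := by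
        rw [hg2, MeasureTheory.integral_const_mul,
          integral_sub_left_eq_self (A.indicator wm') volume θ, integral_indicator hmeasA]
      rw [this]
      have hKR := hKb' R hR0
      calc c2 * ∫ σ in A, wm' σ ≤ c2 * (CK' * (1+R)^(max (m'+(k:ℝ)) 0)) :=
            mul_le_mul_of_nonneg_left hKR hc20
        _ ≤ c2 * (CK' * (1+‖θ‖)^(max (m'+(k:ℝ)) 0)) := by
            refine mul_le_mul_of_nonneg_left (mul_le_mul_of_nonneg_left ?_ hCK'.le) hc20
            exact Real.rpow_le_rpow (by linarith) hbb (le_max_right _ _)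
        _ = (2:ℝ)^(-m) * CK' * ((1+‖θ‖)^m * (1+‖θ‖)^(max (m'+(k:ℝ)) 0)) := by rw [hc2]; ring
        _ = (2:ℝ)^(-m) * CK' * (1+‖θ‖)^(m + max (m'+(k:ℝ)) 0) := by
            rw [← Real.rpow_add (by positivity)]
        _ ≤ (2:ℝ)^(-m) * CK' * X := by
            refine mul_le_mul_of_nonneg_left ?_ (by positivity)
            exact Real.rpow_le_rpow_of_exponent_le (hbase θ) hM2
    have e3' : (∫ σ in B, wmm σ) ≤ c3 * X := by
      have hTR := hTb R hR0
      have hhalf : (1+R)^(m+m'+(k:ℝ)) ≤ (2:ℝ)^(-(m+m'+(k:ℝ))) * (1+‖θ‖)^(m+m'+(k:ℝ)) := by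
        refine half_bound (m+m'+(k:ℝ)) ‖θ‖ R hmmk.le hθ0 ?_
        simp only [hRdef]; linarith
      calc (∫ σ in B, wmm σ) ≤ CT * (1+R)^(m+m'+(k:ℝ)) := hTR
        _ ≤ CT * ((2:ℝ)^(-(m+m'+(k:ℝ))) * (1+‖θ‖)^(m+m'+(k:ℝ))) :=
            mul_le_mul_of_nonneg_left hhalf hCT.le
        _ = c3 * (1+‖θ‖)^(m+m'+(k:ℝ)) := by rw [hc3]; ring
        _ ≤ c3 * X := by
            refine mul_le_mul_of_nonneg_left ?_ hc30.le
            exact Real.rpow_le_rpow_of_exponent_le (hbase θ) hM3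
    have e3 : (∫ σ, g3 σ) ≤ c3 * X := by
      rw [hg3, integral_indicator hmeasB]
      exact e3'
    have e4 : (∫ σ, g4 σ) ≤ c3 * X := by
      rw [hg4, integral_sub_left_eq_self (B.indicator wmm) volume θ, integral_indicator hmeasB]
      exact e3'
    calc (∫ σ : EuclideanSpace ℝ (Fin k), (1+‖σ‖)^m * (1+‖θ-σ‖)^m')
        ≤ ∫ σ, (g1 σ + g2 σ + g3 σ + g4 σ) := integral_mono hint hsum_i pt
      _ = (∫ σ, g1 σ) + (∫ σ, g2 σ) + (∫ σ, g3 σ) + (∫ σ, g4 σ) := by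
          have h12 : Integrable (fun σ => g1 σ + g2 σ) volume := hg1i.add hg2i
          have h123 : Integrable (fun σ => g1 σ + g2 σ + g3 σ) volume := h12.add hg3i
          rw [integral_add h123 hg4i, integral_add h12 hg3i, integral_add hg1i hg2i]
      _ ≤ ((2:ℝ)^(-m') * CK + (2:ℝ)^(-m) * CK' + 2 * c3) * X := by linarith


end PCH

open PCH

/-- Lemma 2.4 in the Hölder range `0 < l, l' < 1`: if
`sup_x |a(x,θ)| + Höl_l(a(·,θ)) ≤ C_a (1+|θ|)^m` and similarly for `b` with
exponents `l', m'`, where `m + m' < -k`, `m + k ≠ 0`, `m' + k ≠ 0`, then the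
partial convolution `c(x,θ) = ∫_{ℝ^k} a(x,σ) b(x,θ-σ) dσ` is well defined and
`sup_x |c(x,θ)| + Höl_{l''}(c(·,θ)) ≤ C C_a C_b (1+|θ|)^{m''}`, with
`l'' = min(l,l')`, `m'' = max((m+k)₊ + m', m + (m'+k)₊, m + m' + k)` and `C`
depending only on `k, l, l', m, m'`. (Sums of suprema bounded by `M` are
expressed by bounding every combination of pointwise terms by `M`.) -/
theorem partial_convolution_holder_estimate (k : ℕ) (hk : 1 ≤ k)
    (l l' : ℝ) (hl0 : 0 < l) (hl1 : l < 1) (hl'0 : 0 < l') (hl'1 : l' < 1)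
    (m m' : ℝ) (hmm' : m + m' < -(k : ℝ))
    (hm : m + (k : ℝ) ≠ 0) (hm' : m' + (k : ℝ) ≠ 0) :
    ∃ C > 0, ∀ (n : ℕ), 1 ≤ n →
      ∀ (a b : EuclideanSpace ℝ (Fin n) → EuclideanSpace ℝ (Fin k) → ℂ)
        (Ca Cb : ℝ),
      Continuous (fun p : EuclideanSpace ℝ (Fin n) × EuclideanSpace ℝ (Fin k) =>
        a p.1 p.2) →
      Continuous (fun p : EuclideanSpace ℝ (Fin n) × EuclideanSpace ℝ (Fin k) =>
        b p.1 p.2) →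
      (∀ θ x y z, y ≠ z →
        ‖a x θ‖ + ‖a y θ - a z θ‖ / ‖y - z‖ ^ l ≤ Ca * (1 + ‖θ‖) ^ m) →
      (∀ θ x y z, y ≠ z →
        ‖b x θ‖ + ‖b y θ - b z θ‖ / ‖y - z‖ ^ l' ≤ Cb * (1 + ‖θ‖) ^ m') →
      (∀ x θ, Integrable (fun σ => a x σ * b x (θ - σ))) ∧
      (∀ θ x y z, y ≠ z →
        ‖∫ σ, a x σ * b x (θ - σ)‖
          + ‖(∫ σ, a y σ * b y (θ - σ)) - (∫ σ, a z σ * b z (θ - σ))‖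
              / ‖y - z‖ ^ (min l l')
        ≤ C * Ca * Cb * (1 + ‖θ‖) ^
            (max (max (max (m + k) 0 + m') (m + max (m' + k) 0)) (m + m' + k))) := by
  obtain ⟨C0, hC0, hkey⟩ := key k hk m m' hmm' hm hm'
  set M := max (max (max (m + (k:ℝ)) 0 + m') (m + max (m' + (k:ℝ)) 0)) (m + m' + (k:ℝ)) with hMdef
  refine ⟨5*C0, by linarith, fun n hn a b Ca Cb hacont hbcont ha hb => ?_⟩
  -- two distinct points of ℝ^n
  have hne : (EuclideanSpace.single (⟨0, hn⟩ : Fin n) (1:ℝ)) ≠ 0 := by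
    intro hcon
    have h := congrArg (fun v : EuclideanSpace ℝ (Fin n) => v ⟨0, hn⟩) hcon
    simp [EuclideanSpace.single_apply] at h
  have hne' : (EuclideanSpace.single (⟨0, hn⟩ : Fin n) (1:ℝ)) ≠ (0 : EuclideanSpace ℝ (Fin n)) := hne
  -- sup bounds
  have hCa : ∀ x θ, ‖a x θ‖ ≤ Ca * (1+‖θ‖)^m := by
    intro x θ
    have h := ha θ x (EuclideanSpace.single (⟨0, hn⟩ : Fin n) (1:ℝ)) 0 hne'
    have h2 : 0 ≤ ‖a (EuclideanSpace.single (⟨0, hn⟩ : Fin n) (1:ℝ)) θ - a 0 θ‖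
        / ‖EuclideanSpace.single (⟨0, hn⟩ : Fin n) (1:ℝ) - 0‖ ^ l :=
      div_nonneg (norm_nonneg _) (Real.rpow_nonneg (norm_nonneg _) _)
    linarith
  have hCb : ∀ x θ, ‖b x θ‖ ≤ Cb * (1+‖θ‖)^m' := by
    intro x θ
    have h := hb θ x (EuclideanSpace.single (⟨0, hn⟩ : Fin n) (1:ℝ)) 0 hne'
    have h2 : 0 ≤ ‖b (EuclideanSpace.single (⟨0, hn⟩ : Fin n) (1:ℝ)) θ - b 0 θ‖
        / ‖EuclideanSpace.single (⟨0, hn⟩ : Fin n) (1:ℝ) - 0‖ ^ l' :=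
      div_nonneg (norm_nonneg _) (Real.rpow_nonneg (norm_nonneg _) _)
    linarith
  have hCa0 : 0 ≤ Ca := by
    have h := hCa 0 0
    have h2 : Ca * (1 + ‖(0 : EuclideanSpace ℝ (Fin k))‖)^m = Ca := by
      rw [norm_zero, add_zero, Real.one_rpow, mul_one]
    rw [h2] at h
    exact le_trans (norm_nonneg _) h
  have hCb0 : 0 ≤ Cb := by
    have h := hCb 0 0
    have h2 : Cb * (1 + ‖(0 : EuclideanSpace ℝ (Fin k))‖)^m' = Cb := by
      rw [norm_zero, add_zero, Real.one_rpow, mul_one]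
    rw [h2] at h
    exact le_trans (norm_nonneg _) h
  -- Hölder bounds with min
  have hCad : ∀ θ y z, ‖a y θ - a z θ‖ ≤ Ca * (1+‖θ‖)^m * min 2 (‖y-z‖^l) := by
    intro θ y z
    have hX0 : (0:ℝ) ≤ Ca * (1+‖θ‖)^m := mul_nonneg hCa0 (Real.rpow_nonneg (by positivity) _)
    rcases eq_or_ne y z with rfl|hyz
    · simp only [sub_self, norm_zero]
      exact mul_nonneg hX0 (le_min (by norm_num) (Real.rpow_nonneg le_rfl _))
    · have hd : (0:ℝ) < ‖y - z‖ := by rwa [norm_sub_pos_iff]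
      have hdl : (0:ℝ) < ‖y - z‖^l := Real.rpow_pos_of_pos hd _
      have h := ha θ y y z hyz
      have hfirst : 0 ≤ ‖a y θ‖ := norm_nonneg _
      have hq : ‖a y θ - a z θ‖ / ‖y-z‖^l ≤ Ca * (1+‖θ‖)^m := by linarith
      have h1 : ‖a y θ - a z θ‖ ≤ Ca * (1+‖θ‖)^m * ‖y-z‖^l := by
        rw [div_le_iff₀ hdl] at hq
        exact hq
      have h2 : ‖a y θ - a z θ‖ ≤ Ca * (1+‖θ‖)^m * 2 := by
        calc ‖a y θ - a z θ‖ ≤ ‖a y θ‖ + ‖a z θ‖ := norm_sub_le _ _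
          _ ≤ Ca * (1+‖θ‖)^m + Ca * (1+‖θ‖)^m := add_le_add (hCa y θ) (hCa z θ)
          _ = Ca * (1+‖θ‖)^m * 2 := by ring
      have := le_min h2 h1
      rwa [← mul_min_of_nonneg _ _ hX0] at this
  have hCbd : ∀ θ y z, ‖b y θ - b z θ‖ ≤ Cb * (1+‖θ‖)^m' * min 2 (‖y-z‖^l') := by
    intro θ y z
    have hX0 : (0:ℝ) ≤ Cb * (1+‖θ‖)^m' := mul_nonneg hCb0 (Real.rpow_nonneg (by positivity) _)
    rcases eq_or_ne y z with rfl|hyz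
    · simp only [sub_self, norm_zero]
      exact mul_nonneg hX0 (le_min (by norm_num) (Real.rpow_nonneg le_rfl _))
    · have hd : (0:ℝ) < ‖y - z‖ := by rwa [norm_sub_pos_iff]
      have hdl : (0:ℝ) < ‖y - z‖^l' := Real.rpow_pos_of_pos hd _
      have h := hb θ y y z hyz
      have hfirst : 0 ≤ ‖b y θ‖ := norm_nonneg _
      have hq : ‖b y θ - b z θ‖ / ‖y-z‖^l' ≤ Cb * (1+‖θ‖)^m' := by linarith
      have h1 : ‖b y θ - b z θ‖ ≤ Cb * (1+‖θ‖)^m' * ‖y-z‖^l' := by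
        rw [div_le_iff₀ hdl] at hq
        exact hq
      have h2 : ‖b y θ - b z θ‖ ≤ Cb * (1+‖θ‖)^m' * 2 := by
        calc ‖b y θ - b z θ‖ ≤ ‖b y θ‖ + ‖b z θ‖ := norm_sub_le _ _
          _ ≤ Cb * (1+‖θ‖)^m' + Cb * (1+‖θ‖)^m' := add_le_add (hCb y θ) (hCb z θ)
          _ = Cb * (1+‖θ‖)^m' * 2 := by ring
      have := le_min h2 h1
      rwa [← mul_min_of_nonneg _ _ hX0] at this
  -- integrability
  have hint : ∀ x θ, Integrable (fun σ => a x σ * b x (θ - σ)) := by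
    intro x θ
    refine ((hkey θ).1.const_mul (Ca*Cb)).mono' ?_ ?_
    · have h1 : Continuous fun σ : EuclideanSpace ℝ (Fin k) => a x σ :=
        hacont.comp (continuous_const.prodMk continuous_id)
      have h2 : Continuous fun σ : EuclideanSpace ℝ (Fin k) => b x (θ - σ) :=
        (hbcont.comp (continuous_const.prodMk continuous_id)).comp
          (continuous_const.sub continuous_id)
      exact (h1.mul h2).aestronglyMeasurable
    · refine Filter.Eventually.of_forall fun σ => ?_
      rw [norm_mul]
      calc ‖a x σ‖ * ‖b x (θ-σ)‖ ≤ (Ca*(1+‖σ‖)^m) * (Cb*(1+‖θ-σ‖)^m') :=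
            mul_le_mul (hCa x σ) (hCb x (θ-σ)) (norm_nonneg _)
              (mul_nonneg hCa0 (Real.rpow_nonneg (by positivity) _))
        _ = Ca*Cb*((1+‖σ‖)^m*(1+‖θ-σ‖)^m') := by ring
  refine ⟨hint, ?_⟩
  intro θ x y z hyz
  set X := (1+‖θ‖)^M with hX
  have hX0 : (0:ℝ) ≤ X := Real.rpow_nonneg (by positivity) _
  have hd : (0:ℝ) < ‖y - z‖ := by rwa [norm_sub_pos_iff]
  set d := ‖y - z‖ with hddef
  have hdl : (0:ℝ) < d ^ (min l l') := Real.rpow_pos_of_pos hd _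
  -- part 1
  have hnorm1 : ‖∫ σ, a x σ * b x (θ - σ)‖ ≤ Ca*Cb*(C0*X) := by
    calc ‖∫ σ, a x σ * b x (θ-σ)‖ ≤ ∫ σ, ‖a x σ * b x (θ-σ)‖ := norm_integral_le_integral_norm _
      _ ≤ ∫ σ, Ca*Cb*((1+‖σ‖)^m*(1+‖θ-σ‖)^m') := by
          refine integral_mono (hint x θ).norm ((hkey θ).1.const_mul _) (fun σ => ?_)
          rw [norm_mul]
          calc ‖a x σ‖ * ‖b x (θ-σ)‖ ≤ (Ca*(1+‖σ‖)^m) * (Cb*(1+‖θ-σ‖)^m') :=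
                mul_le_mul (hCa x σ) (hCb x (θ-σ)) (norm_nonneg _)
                  (mul_nonneg hCa0 (Real.rpow_nonneg (by positivity) _))
            _ = Ca*Cb*((1+‖σ‖)^m*(1+‖θ-σ‖)^m') := by ring
      _ = Ca*Cb * ∫ σ, (1+‖σ‖)^m*(1+‖θ-σ‖)^m' := MeasureTheory.integral_const_mul _ _
      _ ≤ Ca*Cb*(C0*X) :=
          mul_le_mul_of_nonneg_left (hkey θ).2 (mul_nonneg hCa0 hCb0)
  -- part 2
  have hdiff : ∀ σ, ‖a y σ * b y (θ-σ) - a z σ * b z (θ-σ)‖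
      ≤ (Ca*Cb*(min 2 (d^l) + min 2 (d^l')))*((1+‖σ‖)^m*(1+‖θ-σ‖)^m') := by
    intro σ
    have hsplit : a y σ * b y (θ-σ) - a z σ * b z (θ-σ)
        = (a y σ - a z σ) * b y (θ-σ) + a z σ * (b y (θ-σ) - b z (θ-σ)) := by ring
    rw [hsplit]
    have hb1 : (0:ℝ) ≤ Cb*(1+‖θ-σ‖)^m' := mul_nonneg hCb0 (Real.rpow_nonneg (by positivity) _)
    have ha1 : (0:ℝ) ≤ Ca*(1+‖σ‖)^m := mul_nonneg hCa0 (Real.rpow_nonneg (by positivity) _)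
    calc ‖(a y σ - a z σ) * b y (θ-σ) + a z σ * (b y (θ-σ) - b z (θ-σ))‖
        ≤ ‖(a y σ - a z σ) * b y (θ-σ)‖ + ‖a z σ * (b y (θ-σ) - b z (θ-σ))‖ := norm_add_le _ _
      _ = ‖a y σ - a z σ‖*‖b y (θ-σ)‖ + ‖a z σ‖*‖b y (θ-σ) - b z (θ-σ)‖ := by
          rw [norm_mul, norm_mul]
      _ ≤ (Ca*(1+‖σ‖)^m*min 2 (d^l))*(Cb*(1+‖θ-σ‖)^m')
          + (Ca*(1+‖σ‖)^m)*(Cb*(1+‖θ-σ‖)^m'*min 2 (d^l')) := by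
          refine add_le_add (mul_le_mul (hCad σ y z) (hCb y (θ-σ)) (norm_nonneg _) ?_)
            (mul_le_mul (hCa z σ) (hCbd (θ-σ) y z) (norm_nonneg _) ha1)
          exact mul_nonneg ha1 (le_min (by norm_num) (Real.rpow_nonneg (norm_nonneg _) _))
      _ = (Ca*Cb*(min 2 (d^l) + min 2 (d^l')))*((1+‖σ‖)^m*(1+‖θ-σ‖)^m') := by ring
  have hmins0 : (0:ℝ) ≤ min 2 (d^l) + min 2 (d^l') := by
    have h1 := le_min (by norm_num : (0:ℝ) ≤ 2) (Real.rpow_nonneg (norm_nonneg (y - z)) l)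
    have h2 := le_min (by norm_num : (0:ℝ) ≤ 2) (Real.rpow_nonneg (norm_nonneg (y - z)) l')
    rw [← hddef] at h1 h2
    linarith
  have hnum : ‖(∫ σ, a y σ * b y (θ - σ)) - (∫ σ, a z σ * b z (θ - σ))‖
      ≤ (Ca*Cb*(min 2 (d^l) + min 2 (d^l')))*(C0*X) := by
    rw [← integral_sub (hint y θ) (hint z θ)]
    calc ‖∫ σ, (a y σ * b y (θ-σ) - a z σ * b z (θ-σ))‖
        ≤ ∫ σ, ‖a y σ * b y (θ-σ) - a z σ * b z (θ-σ)‖ := norm_integral_le_integral_norm _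
      _ ≤ ∫ σ, (Ca*Cb*(min 2 (d^l) + min 2 (d^l')))*((1+‖σ‖)^m*(1+‖θ-σ‖)^m') :=
          integral_mono ((hint y θ).sub (hint z θ)).norm ((hkey θ).1.const_mul _) hdiff
      _ = (Ca*Cb*(min 2 (d^l) + min 2 (d^l'))) * ∫ σ, (1+‖σ‖)^m*(1+‖θ-σ‖)^m' :=
          MeasureTheory.integral_const_mul _ _
      _ ≤ (Ca*Cb*(min 2 (d^l) + min 2 (d^l')))*(C0*X) :=
          mul_le_mul_of_nonneg_left (hkey θ).2
            (mul_nonneg (mul_nonneg hCa0 hCb0) hmins0)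
  have hmin4 : min 2 (d^l) + min 2 (d^l') ≤ 4 * d^(min l l') := by
    have h0 : (0:ℝ) ≤ d^(min l l') := hdl.le
    rcases le_or_gt d 1 with hd1|hd1
    · have h1 : min 2 (d^l) ≤ d^(min l l') :=
        le_trans (min_le_right _ _) (Real.rpow_le_rpow_of_exponent_ge hd hd1 (min_le_left l l'))
      have h2 : min 2 (d^l') ≤ d^(min l l') :=
        le_trans (min_le_right _ _) (Real.rpow_le_rpow_of_exponent_ge hd hd1 (min_le_right l l'))
      linarith
    · have h4 : (1:ℝ) ≤ d^(min l l') := by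
        have := Real.rpow_le_rpow_of_exponent_le hd1.le
          (le_of_lt (lt_min hl0 hl'0) : (0:ℝ) ≤ min l l')
        rwa [Real.rpow_zero] at this
      have h1 : min 2 (d^l) ≤ 2 := min_le_left _ _
      have h2 : min 2 (d^l') ≤ 2 := min_le_left _ _
      linarith
  have final2 : ‖(∫ σ, a y σ * b y (θ - σ)) - (∫ σ, a z σ * b z (θ - σ))‖ / d^(min l l')
      ≤ 4*C0*Ca*Cb*X := by
    rw [div_le_iff₀ hdl]
    calc ‖(∫ σ, a y σ * b y (θ - σ)) - (∫ σ, a z σ * b z (θ - σ))‖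
        ≤ (Ca*Cb*(min 2 (d^l) + min 2 (d^l')))*(C0*X) := hnum
      _ ≤ (Ca*Cb*(4 * d^(min l l')))*(C0*X) := by
          refine mul_le_mul_of_nonneg_right
            (mul_le_mul_of_nonneg_left hmin4 (mul_nonneg hCa0 hCb0))
            (mul_nonneg hC0.le hX0)
      _ = 4*C0*Ca*Cb*X*d^(min l l') := by ring
  calc ‖∫ σ, a x σ * b x (θ - σ)‖
        + ‖(∫ σ, a y σ * b y (θ - σ)) - (∫ σ, a z σ * b z (θ - σ))‖ / d^(min l l')
      ≤ Ca*Cb*(C0*X) + 4*C0*Ca*Cb*X := add_le_add hnorm1 final2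
    _ = 5*C0*Ca*Cb*X := by ring
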